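/- arXiv:1701.08948 — 4 statements merged into one kernel-verified Lean document; each statement's English description precedes it below -/
import Mathlib

section
/- If a nonnegative locally Lipschitz function k : (0,T) → ℝ satisfies d/dt (1/k(t)) ≥ -4 almost everywhere (where k > 0), and there is a sequence t_j → T with k(t_j) → ∞, then k(t) ≥ 1/(4(T−t)) for all t ∈ (0,T). -/
/-!
Away from its zeros the reciprocal of a locally Lipschitz function is locally Lipschitz, so
`g = 1/k` is Lipschitz, hence absolutely continuous, on every compact subinterval of `(0, T)`.
The fundamental theorem of calculus for absolutely continuous functions turns `g' ≥ -4` into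
`g t ≤ g s + 4 (s - t)` for `t < s < T`; taking `s = t_j`, where `g (t_j) → 0`, gives
`1 / k t ≤ 4 (T - t)`.
-/

open Set Filter MeasureTheory Topology

theorem LipschitzOnWith.inv_of_le_norm {α 𝕜 : Type*} [PseudoMetricSpace α] [NormedDivisionRing 𝕜]
    {f : α → 𝕜} {s : Set α} {K : NNReal} {m : ℝ} (hf : LipschitzOnWith K f s) (hm : 0 < m)
    (hfm : ∀ x ∈ s, m ≤ ‖f x‖) :
    LipschitzOnWith (K / m.toNNReal ^ 2) (fun x => (f x)⁻¹) s := by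
  refine LipschitzOnWith.of_dist_le_mul fun x hx y hy => ?_
  have hx0 : f x ≠ 0 := norm_pos_iff.1 (hm.trans_le (hfm x hx))
  have hy0 : f y ≠ 0 := norm_pos_iff.1 (hm.trans_le (hfm y hy))
  have hprod : m * m ≤ ‖f x‖ * ‖f y‖ := mul_le_mul (hfm x hx) (hfm y hy) hm.le (norm_nonneg _)
  calc dist (f x)⁻¹ (f y)⁻¹ = ‖f x‖⁻¹ * dist (f x) (f y) * ‖f y‖⁻¹ := by
        rw [dist_eq_norm, inv_sub_inv' hx0 hy0, norm_mul, norm_mul, norm_inv, norm_inv,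
          dist_eq_norm, norm_sub_rev]
    _ = dist (f x) (f y) / (‖f x‖ * ‖f y‖) := by field_simp
    _ ≤ K * dist x y / (m * m) :=
        div_le_div₀ (by positivity) (hf.dist_le_mul x hx y hy) (by positivity) hprod
    _ = ↑(K / m.toNNReal ^ 2) * dist x y := by
        rw [NNReal.coe_div, NNReal.coe_pow, Real.coe_toNNReal _ hm.le]; ring

theorem LocallyLipschitzOn.inv₀ {α 𝕜 : Type*} [PseudoMetricSpace α] [NormedDivisionRing 𝕜]
    {f : α → 𝕜} {s : Set α} (hf : LocallyLipschitzOn s f) (hf0 : ∀ x ∈ s, f x ≠ 0) :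
    LocallyLipschitzOn s (fun x => (f x)⁻¹) := by
  intro x hx
  obtain ⟨K, t, ht, hK⟩ := hf hx
  have hfx : 0 < ‖f x‖ := norm_pos_iff.2 (hf0 x hx)
  have hnear : ∀ᶠ y in 𝓝[s] x, ‖f x‖ / 2 < ‖f y‖ :=
    (hf.continuousOn x hx).norm.eventually (lt_mem_nhds (half_lt_self hfx))
  exact ⟨_, t ∩ {y | ‖f x‖ / 2 < ‖f y‖}, inter_mem ht hnear,
    (hK.mono inter_subset_left).inv_of_le_norm (half_pos hfx) fun y hy => hy.2.le⟩

theorem AbsolutelyContinuousOnInterval.mul_sub_le_sub_of_le_deriv {g : ℝ → ℝ} {a b c : ℝ}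
    (hg : AbsolutelyContinuousOnInterval g a b) (hab : a ≤ b)
    (hc : ∀ᵐ t ∂volume.restrict (Icc a b), c ≤ deriv g t) :
    c * (b - a) ≤ g b - g a := by
  calc c * (b - a) = ∫ _ in a..b, c := by simp [mul_comm]
    _ ≤ ∫ t in a..b, deriv g t :=
        intervalIntegral.integral_mono_ae_restrict hab intervalIntegrable_const
          hg.intervalIntegrable_deriv hc
    _ = g b - g a := hg.integral_deriv_eq_sub

theorem stmt_1_general (T : ℝ) (k : ℝ → ℝ)
    (hpos : ∀ t ∈ Ioo (0:ℝ) T, 0 < k t)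
    (hlip : LocallyLipschitzOn (Ioo (0:ℝ) T) k)
    (hder : ∀ t ∈ Ioo (0:ℝ) T,
      DifferentiableAt ℝ (fun s => (k s)⁻¹) t → -4 ≤ deriv (fun s => (k s)⁻¹) t)
    (tj : ℕ → ℝ) (htj : ∀ j, tj j ∈ Ioo (0:ℝ) T)
    (htjT : Tendsto tj atTop (nhds T))
    (hblow : Tendsto (fun j => k (tj j)) atTop atTop) :
    ∀ t ∈ Ioo (0:ℝ) T, 1 / (4 * (T - t)) ≤ k t := by
  intro t ht
  set g : ℝ → ℝ := fun s => (k s)⁻¹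
  have hg_lip : LocallyLipschitzOn (Ioo 0 T) g := hlip.inv₀ fun s hs => (hpos s hs).ne'
  -- `deriv g = 0` wherever `g` is not differentiable, so the bound holds on the whole interval.
  have hg_deriv : ∀ s ∈ Ioo (0:ℝ) T, -4 ≤ deriv g s := fun s hs => by
    by_cases hd : DifferentiableAt ℝ g s
    · exact hder s hs hd
    · rw [deriv_zero_of_not_differentiableAt hd]; norm_num
  have hg_slope : ∀ s ∈ Ioo t T, g t ≤ g s + 4 * (s - t) := fun s hs => by
    have hsub : Icc t s ⊆ Ioo 0 T := Icc_subset_Ioo ht.1 hs.2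
    obtain ⟨K, hK⟩ := (hg_lip.mono hsub).exists_lipschitzOnWith_of_compact isCompact_Icc
    have := (hK.mono (uIcc_of_le hs.1.le).subset).absolutelyContinuousOnInterval
      |>.mul_sub_le_sub_of_le_deriv hs.1.le
        (ae_restrict_of_forall_mem measurableSet_Icc fun u hu => hg_deriv u (hsub hu))
    linarith
  have hg_le : g t ≤ 4 * (T - t) := by
    have hlim : Tendsto (fun j => g (tj j) + 4 * (tj j - t)) atTop (𝓝 (0 + 4 * (T - t))) :=
      (tendsto_inv_atTop_zero.comp hblow).add ((htjT.sub_const t).const_mul 4)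
    have hev : ∀ᶠ j in atTop, g t ≤ g (tj j) + 4 * (tj j - t) := by
      filter_upwards [htjT.eventually (lt_mem_nhds ht.2)] with j hj
      exact hg_slope (tj j) ⟨hj, (htj j).2⟩
    simpa using ge_of_tendsto hlim hev
  have hk := hpos t ht
  rw [one_div, inv_le_comm₀ (lt_of_lt_of_le (inv_pos.2 hk) hg_le) hk]
  exact hg_le

theorem stmt_1 (T : ℝ) (hT : 0 < T) (k : ℝ → ℝ)
    (hpos : ∀ t ∈ Ioo (0:ℝ) T, 0 < k t)
    (hlip : LocallyLipschitzOn (Ioo (0:ℝ) T) k)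
    (hder : ∀ t ∈ Ioo (0:ℝ) T,
      DifferentiableAt ℝ (fun s => (k s)⁻¹) t → -4 ≤ deriv (fun s => (k s)⁻¹) t)
    (hdiff_ae : ∀ᵐ t ∂(MeasureTheory.volume.restrict (Ioo (0:ℝ) T)),
      DifferentiableAt ℝ (fun s => (k s)⁻¹) t)
    (tj : ℕ → ℝ) (htj : ∀ j, tj j ∈ Ioo (0:ℝ) T)
    (htjT : Tendsto tj atTop (nhds T))
    (hblow : Tendsto (fun j => k (tj j)) atTop atTop) :
    ∀ t ∈ Ioo (0:ℝ) T, 1 / (4 * (T - t)) ≤ k t :=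
  stmt_1_general T k hpos hlip hder tj htj htjT hblow
end

section
/- Let u : [0,T) → ℝ be differentiable with u(t) > 0 for all t and u'(t) ≤ 4 u(t)^2. If u is unbounded on [0,T) (T finite), then u(t) ≥ 1/(4(T−t)) for all t ∈ (0,T). -/
open Set

theorem stmt_2 (T : ℝ) (hT : 0 < T) (u u' : ℝ → ℝ)
    (hpos : ∀ t ∈ Ico (0:ℝ) T, 0 < u t)
    (hderiv : ∀ t ∈ Ico (0:ℝ) T, HasDerivAt u (u' t) t)
    (hineq : ∀ t ∈ Ico (0:ℝ) T, u' t ≤ 4 * (u t) ^ 2)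
    (hunb : ¬ BddAbove (u '' Ico (0:ℝ) T)) :
    ∀ t ∈ Ioo (0:ℝ) T, 1 / (4 * (T - t)) ≤ u t := by
  intro t ht
  obtain ⟨ht0, htT⟩ := ht
  have htmem : t ∈ Ico (0:ℝ) T := ⟨ht0.le, htT⟩
  have hut : 0 < u t := hpos t htmem
  -- continuity of u on [0, t] gives a max value C
  have hcont : ContinuousOn u (Icc 0 t) := fun x hx =>
    (hderiv x ⟨hx.1, lt_of_le_of_lt hx.2 htT⟩).continuousAt.continuousWithinAt
  obtain ⟨x₀, hx₀, hmax'⟩ := isCompact_Icc.exists_isMaxOn (nonempty_Icc.2 ht0.le) hcont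
  have hmax : ∀ x ∈ Icc (0:ℝ) t, u x ≤ u x₀ := fun x hx => hmax' hx
  set C := u x₀ with hC
  -- key monotonicity estimate
  have key : ∀ s, t ≤ s → s < T → (u t)⁻¹ ≤ (u s)⁻¹ + 4 * (s - t) := by
    intro s hts hsT
    have hsub : Icc t s ⊆ Ico 0 T := fun x hx =>
      ⟨le_trans ht0.le hx.1, lt_of_le_of_lt hx.2 hsT⟩
    have hf : ∀ x ∈ Icc t s, HasDerivAt (fun y => (u y)⁻¹ + 4 * y)
        (-(u' x) / (u x) ^ 2 + 4) x := by
      intro x hx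
      have hx' := hsub hx
      have h1 := (hderiv x hx').inv (ne_of_gt (hpos x hx'))
      have h2 : HasDerivAt (fun y : ℝ => 4 * y) 4 x := by
        simpa using (hasDerivAt_id x).const_mul (4 : ℝ)
      exact h1.add h2
    have hmono : MonotoneOn (fun y => (u y)⁻¹ + 4 * y) (Icc t s) := by
      apply monotoneOn_of_deriv_nonneg (convex_Icc t s)
      · exact fun x hx => (hf x hx).continuousAt.continuousWithinAt
      · intro x hx
        rw [interior_Icc] at hx
        exact (hf x (Ioo_subset_Icc_self hx)).differentiableAt.differentiableWithinAt
      · intro x hx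
        rw [interior_Icc] at hx
        have hx' := hsub (Ioo_subset_Icc_self hx)
        rw [(hf x (Ioo_subset_Icc_self hx)).deriv]
        have h1 := hineq x hx'
        have h2 : (0:ℝ) < (u x) ^ 2 := pow_pos (hpos x hx') 2
        have h3 : u' x / (u x) ^ 2 ≤ 4 := by
          rw [div_le_iff₀ h2]; linarith
        rw [neg_div]
        linarith
    have := hmono (left_mem_Icc.2 hts) (right_mem_Icc.2 hts) hts
    simp only at this
    linarith
  -- reduce goal
  have hTt : (0:ℝ) < 4 * (T - t) := by linarith
  rw [div_le_iff₀ hTt]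
  have hsuff : (u t)⁻¹ ≤ 4 * (T - t) := by
    apply le_of_forall_pos_le_add
    intro ε hε
    obtain ⟨y, hy, hMy⟩ := (not_bddAbove_iff.1 hunb) (max C ε⁻¹)
    obtain ⟨s, hs, rfl⟩ := hy
    have hCs : C < u s := lt_of_le_of_lt (le_max_left _ _) hMy
    have hεs : ε⁻¹ < u s := lt_of_le_of_lt (le_max_right _ _) hMy
    have hts : t ≤ s := by
      by_contra h
      push_neg at h
      exact absurd (hmax s ⟨hs.1, h.le⟩) (not_le.2 hCs)
    have hus : 0 < u s := hpos s hs
    have hεinv : (u s)⁻¹ ≤ ε := by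
      have h1 : (u s)⁻¹ < (ε⁻¹)⁻¹ := by
        apply inv_strictAnti₀ (inv_pos.2 hε) hεs
      rw [inv_inv] at h1
      exact h1.le
    have := key s hts hs.2
    have h4 : 4 * (s - t) ≤ 4 * (T - t) := by nlinarith [hs.2]
    linarith
  nlinarith [mul_inv_cancel₀ (ne_of_gt hut), hsuff, hut]
end

section
/- Suppose κ : [a,b] → ℝ is C², a is a maximum point of κ², and the boundary relation ∂_s κ(a) = (κ(a) − κ̄)·k holds with k ≥ 0 and min κ ≤ κ̄ ≤ max κ. Then ∂_s(κ²)(a) = 0 and ∂_s²(κ²)(a) ≤ 0. -/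
/-!
At the maximum point `a` of `κ²` the one-sided first-derivative test gives `∂ₛ(κ²)(a) ≤ 0`.
Conversely `κ(a)` is the extreme value of `κ` of its own sign, so `κ̄`, which lies between
`min κ` and `max κ`, is on the same side of `κ(a)` as `0`: `κ(a)(κ(a) - κ̄) ≥ 0`. The boundary
relation then turns `∂ₛ(κ²)(a) = 2κ(a)∂ₛκ(a) = 2k κ(a)(κ(a) - κ̄)` into a nonnegative number,
so it vanishes. Once the first derivative vanishes, a positive second derivative would make `κ²`
strictly increasing just to the right of `a`, contradicting maximality.
-/

open Set Filter Topology

section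

variable {f : ℝ → ℝ} {a b : ℝ}

theorem IsMaxOn.deriv_nonpos_of_Icc (hab : a < b) (h : IsMaxOn f (Icc a b) a) : deriv f a ≤ 0 := by
  by_cases hf : DifferentiableAt ℝ f a
  · have hcone : (1 : ℝ) ∈ posTangentConeAt (Icc a b) a :=
      one_mem_posTangentConeAt_iff_frequently.2 (Eventually.frequently (Icc_mem_nhdsGT hab))
    simpa using h.localize.hasFDerivWithinAt_nonpos hf.hasFDerivAt.hasFDerivWithinAt hcone
  · rw [deriv_zero_of_not_differentiableAt hf]

theorem IsMaxOn.deriv_deriv_nonpos_of_Icc (hab : a < b) (h : IsMaxOn f (Icc a b) a)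
    (hcont : ContinuousOn f (Icc a b)) (hd : deriv f a = 0) : deriv (deriv f) a ≤ 0 := by
  by_contra! hpos
  have hright : ∀ᶠ x in 𝓝[>] a, 0 < deriv f x :=
    deriv_pos_right_of_sign_deriv <| nhdsWithin_le_nhds <|
      eventually_nhdsWithin_sign_eq_of_deriv_pos hpos hd
  obtain ⟨u, hu, hsub⟩ :=
    mem_nhdsGT_iff_exists_Ioo_subset.mp (hright.and (Ioo_mem_nhdsGT hab))
  obtain ⟨c, hac, hcu⟩ := exists_between (mem_Ioi.1 hu)
  have hcb : c < b := (hsub ⟨hac, hcu⟩).2.2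
  have hmono : StrictMonoOn f (Icc a c) := by
    refine strictMonoOn_of_deriv_pos (convex_Icc a c)
      (hcont.mono (Icc_subset_Icc_right hcb.le)) fun x hx => ?_
    rw [interior_Icc] at hx
    exact (hsub ⟨hx.1, hx.2.trans hcu⟩).1
  have hlt : f a < f c := hmono (left_mem_Icc.2 hac.le) (right_mem_Icc.2 hac.le) hac
  exact hlt.not_ge (h ⟨hac.le, hcb.le⟩)

end

theorem mul_sub_nonneg_of_forall_sq_le {S : Set ℝ} {x c : ℝ} (hx : x ∈ S)
    (hmax : ∀ y ∈ S, y ^ 2 ≤ x ^ 2) (hlo : sInf S ≤ c) (hhi : c ≤ sSup S) :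
    0 ≤ x * (x - c) := by
  rcases le_or_gt 0 x with hpos | hneg
  · have hub : sSup S ≤ x :=
      csSup_le ⟨x, hx⟩ fun y hy => (abs_le_of_sq_le_sq' (hmax y hy) hpos).2
    exact mul_nonneg hpos (by linarith)
  · have hlb : x ≤ sInf S := by
      refine le_csInf ⟨x, hx⟩ fun y hy => ?_
      have hsq : y ^ 2 ≤ (-x) ^ 2 := by rw [neg_sq]; exact hmax y hy
      linarith [(abs_le_of_sq_le_sq' hsq (by linarith)).1]
    exact mul_nonneg_of_nonpos_of_nonpos hneg.le (by linarith)

theorem stmt_15 (a b : ℝ) (hab : a < b) (κ : ℝ → ℝ) (κbar k : ℝ)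
    (hκ : ContDiff ℝ 2 κ)
    (hmax : ∀ x ∈ Icc a b, κ x ^ 2 ≤ κ a ^ 2)
    (hk : 0 ≤ k)
    (hbar_lo : sInf (κ '' Icc a b) ≤ κbar)
    (hbar_hi : κbar ≤ sSup (κ '' Icc a b))
    (hbdry : deriv κ a = (κ a - κbar) * k) :
    deriv (fun t => κ t ^ 2) a = 0 ∧ deriv (deriv (fun t => κ t ^ 2)) a ≤ 0 := by
  have hmaxOn : IsMaxOn (fun t => κ t ^ 2) (Icc a b) a := isMaxOn_iff.2 hmax
  have hsign : 0 ≤ κ a * (κ a - κbar) :=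
    mul_sub_nonneg_of_forall_sq_le (mem_image_of_mem κ (left_mem_Icc.2 hab.le))
      (by rintro _ ⟨x, hx, rfl⟩; exact hmax x hx) hbar_lo hbar_hi
  have hderiv : deriv (fun t => κ t ^ 2) a = 2 * k * (κ a * (κ a - κbar)) := by
    rw [deriv_fun_pow (hκ.differentiable two_ne_zero a), hbdry]
    ring
  have hd : deriv (fun t => κ t ^ 2) a = 0 :=
    (hmaxOn.deriv_nonpos_of_Icc hab).antisymm (hderiv ▸ by positivity)
  exact ⟨hd, hmaxOn.deriv_deriv_nonpos_of_Icc hab (hκ.continuous.pow 2).continuousOn hd⟩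
end

section
/- Let E : [0,T) → [0,∞) be C¹ with E'(t) ≤ C(E(t) + E(t)³) and suppose E is unbounded as t → T < ∞. Then there exists a sequence t_k → T and a constant c > 0 such that E(t_k) ≥ c (T − t_k)^{−1/2}. -/
/-!
The Lyapunov function `(E + 1)⁻² + 2Ct` is nondecreasing, because the differential inequality
gives `E' ≤ C (E + 1)³`. Letting `t → T` along the blow-up sequence, where `(E + 1)⁻²` tends to
`0`, yields `(E t + 1)⁻² ≤ 2C (T - t)` for every `t < T`, i.e. `E t + 1 ≳ (T - t)^{-1/2}`. Near `T`
the summand `1` is absorbed at the cost of a factor `2`, so the blow-up sequence itself satisfies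
the bound from some index on.
-/

open Set Filter Real Topology

lemma le_mul_add_one_pow_three {a b C : ℝ} (ha : 0 ≤ a) (hC : 0 ≤ C)
    (hb : b ≤ C * (a + a ^ 3)) : b ≤ C * (a + 1) ^ 3 :=
  hb.trans (mul_le_mul_of_nonneg_left (by nlinarith [sq_nonneg a]) hC)

section Lyapunov

variable {s : Set ℝ} {C : ℝ} {E E' : ℝ → ℝ}

lemma hasDerivAt_inv_add_one_sq_add_mul {t : ℝ} (hE : HasDerivAt E (E' t) t) (ht : E t + 1 ≠ 0) :
    HasDerivAt (fun y => (E y + 1)⁻¹ ^ 2 + 2 * C * y)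
      (2 * C - 2 * E' t * (E t + 1)⁻¹ ^ 3) t := by
  refine ((((hE.add_const 1).inv ht).pow 2).add
    ((hasDerivAt_id t).const_mul (2 * C))).congr_deriv ?_
  simp only [Pi.inv_apply, Nat.cast_ofNat, Nat.add_one_sub_one, pow_one, mul_one]
  field_simp
  ring

lemma monotoneOn_inv_add_one_sq_add_mul (hs : Convex ℝ s) (hC : 0 ≤ C)
    (hnonneg : ∀ t ∈ s, 0 ≤ E t) (hderiv : ∀ t ∈ s, HasDerivAt E (E' t) t)
    (hineq : ∀ t ∈ s, E' t ≤ C * (E t + E t ^ 3)) :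
    MonotoneOn (fun t => (E t + 1)⁻¹ ^ 2 + 2 * C * t) s := by
  have hpos : ∀ t ∈ s, 0 < E t + 1 := fun t ht => by linarith [hnonneg t ht]
  have hφ : ∀ t ∈ s, HasDerivAt (fun y => (E y + 1)⁻¹ ^ 2 + 2 * C * y)
      (2 * C - 2 * E' t * (E t + 1)⁻¹ ^ 3) t := fun t ht =>
    hasDerivAt_inv_add_one_sq_add_mul (hderiv t ht) (hpos t ht).ne'
  refine monotoneOn_of_hasDerivWithinAt_nonneg hs
    (fun t ht => (hφ t ht).continuousAt.continuousWithinAt)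
    (fun t ht => (hφ t (interior_subset ht)).hasDerivWithinAt) fun t ht => ?_
  replace ht := interior_subset ht
  have hcube : E' t * (E t + 1)⁻¹ ^ 3 ≤ C := by
    rw [inv_pow, ← div_eq_mul_inv, div_le_iff₀ (pow_pos (hpos t ht) 3)]
    exact le_mul_add_one_pow_three (hnonneg t ht) hC (hineq t ht)
  linarith

lemma inv_add_one_sq_le_of_tendsto_atTop (hs : Convex ℝ s) (hC : 0 ≤ C)
    (hnonneg : ∀ t ∈ s, 0 ≤ E t) (hderiv : ∀ t ∈ s, HasDerivAt E (E' t) t)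
    (hineq : ∀ t ∈ s, E' t ≤ C * (E t + E t ^ 3)) {T : ℝ} {sj : ℕ → ℝ} (hsj : ∀ j, sj j ∈ s)
    (hsjT : Tendsto sj atTop (𝓝 T)) (hblow : Tendsto (fun j => E (sj j)) atTop atTop)
    {t : ℝ} (ht : t ∈ s) (htT : t < T) : (E t + 1)⁻¹ ^ 2 ≤ 2 * C * (T - t) := by
  have hlim : Tendsto (fun j => (E (sj j) + 1)⁻¹ ^ 2 + 2 * C * sj j) atTop
      (𝓝 (0 ^ 2 + 2 * C * T)) :=
    ((tendsto_atTop_add_const_right _ 1 hblow).inv_tendsto_atTop.pow 2).add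
      (hsjT.const_mul (2 * C))
  have hmono := monotoneOn_inv_add_one_sq_add_mul hs hC hnonneg hderiv hineq
  have hle : ∀ᶠ j in atTop,
      (E t + 1)⁻¹ ^ 2 + 2 * C * t ≤ (E (sj j) + 1)⁻¹ ^ 2 + 2 * C * sj j := by
    filter_upwards [hsjT.eventually (eventually_gt_nhds htT)] with j hj
    exact hmono ht (hsj j) hj.le
  have := ge_of_tendsto hlim hle
  linarith

end Lyapunov

lemma div_two_mul_le_of_inv_add_one_le {a y : ℝ} (ha : 0 ≤ a) (hy : 0 < y) (hy2 : y ≤ 1 / 2)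
    (h : (a + 1)⁻¹ ≤ y) : 1 / (2 * y) ≤ a := by
  rw [inv_le_iff_one_le_mul₀' (by linarith)] at h
  rw [div_le_iff₀ (by positivity)]
  nlinarith

lemma mul_rpow_neg_half_le_of_inv_add_one_sq_le {a K x : ℝ} (ha : 0 ≤ a) (hK : 0 < K)
    (hx : 0 < x) (hKx : K * x ≤ 1 / 4) (h : (a + 1)⁻¹ ^ 2 ≤ K * x) :
    1 / (2 * √K) * x ^ (-(1:ℝ)/2) ≤ a := by
  have hy : 0 < √(K * x) := sqrt_pos.mpr (by positivity)
  have hy2 : √(K * x) ≤ 1 / 2 := by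
    rw [sqrt_le_left (by norm_num)]
    linarith
  have hinv : (a + 1)⁻¹ ≤ √(K * x) := by
    rw [← sqrt_sq (show 0 ≤ (a + 1)⁻¹ by positivity)]
    exact sqrt_le_sqrt h
  calc 1 / (2 * √K) * x ^ (-(1:ℝ)/2)
      = 1 / (2 * √(K * x)) := by
        rw [show -(1:ℝ)/2 = -(1/2) by ring, rpow_neg hx.le, ← sqrt_eq_rpow,
          sqrt_mul hK.le]
        field_simp
    _ ≤ a := div_two_mul_le_of_inv_add_one_le ha hy hy2 hinv

theorem stmt_17_general (T : ℝ) (C : ℝ) (hC : 0 < C) (E E' : ℝ → ℝ)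
    (hnonneg : ∀ t ∈ Ico (0:ℝ) T, 0 ≤ E t)
    (hderiv : ∀ t ∈ Ico (0:ℝ) T, HasDerivAt E (E' t) t)
    (hineq : ∀ t ∈ Ico (0:ℝ) T, E' t ≤ C * (E t + E t ^ 3))
    (sj : ℕ → ℝ) (hsj : ∀ j, sj j ∈ Ico (0:ℝ) T)
    (hsjT : Tendsto sj atTop (nhds T))
    (hblow : Tendsto (fun j => E (sj j)) atTop atTop) :
    ∃ c : ℝ, 0 < c ∧ ∃ tk : ℕ → ℝ, (∀ k, tk k ∈ Ico (0:ℝ) T) ∧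
      Tendsto tk atTop (nhds T) ∧
      ∀ k, c * (T - tk k) ^ (-(1:ℝ)/2) ≤ E (tk k) := by
  have hnear : ∀ᶠ j in atTop, 2 * C * (T - sj j) ≤ 1 / 4 := by
    have : Tendsto (fun j => 2 * C * (T - sj j)) atTop (𝓝 (2 * C * (T - T))) :=
      (tendsto_const_nhds.sub hsjT).const_mul _
    rw [sub_self, mul_zero] at this
    exact this.eventually (eventually_le_nhds (by norm_num))
  obtain ⟨N, hN⟩ := eventually_atTop.mp hnear
  refine ⟨1 / (2 * √(2 * C)), by positivity, fun k => sj (k + N), fun k => hsj _,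
    hsjT.comp (tendsto_add_atTop_nat N), fun k => ?_⟩
  have hmem := hsj (k + N)
  exact mul_rpow_neg_half_le_of_inv_add_one_sq_le (hnonneg _ hmem) (by positivity)
    (sub_pos.mpr hmem.2) (hN _ (Nat.le_add_left N k))
    (inv_add_one_sq_le_of_tendsto_atTop (convex_Ico 0 T) hC.le hnonneg hderiv hineq hsj hsjT
      hblow hmem hmem.2)

theorem stmt_17 (T : ℝ) (hT : 0 < T) (C : ℝ) (hC : 0 < C) (E E' : ℝ → ℝ)
    (hnonneg : ∀ t ∈ Ico (0:ℝ) T, 0 ≤ E t)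
    (hderiv : ∀ t ∈ Ico (0:ℝ) T, HasDerivAt E (E' t) t)
    (hE'cont : ContinuousOn E' (Ico (0:ℝ) T))
    (hineq : ∀ t ∈ Ico (0:ℝ) T, E' t ≤ C * (E t + E t ^ 3))
    (sj : ℕ → ℝ) (hsj : ∀ j, sj j ∈ Ico (0:ℝ) T)
    (hsjT : Tendsto sj atTop (nhds T))
    (hblow : Tendsto (fun j => E (sj j)) atTop atTop) :
    ∃ c : ℝ, 0 < c ∧ ∃ tk : ℕ → ℝ, (∀ k, tk k ∈ Ico (0:ℝ) T) ∧
      Tendsto tk atTop (nhds T) ∧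
      ∀ k, c * (T - tk k) ^ (-(1:ℝ)/2) ≤ E (tk k) :=
  stmt_17_general T C hC E E' hnonneg hderiv hineq sj hsj hsjT hblow
end
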